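/- arXiv:2108.09850 — 7 statements merged into one kernel-verified Lean document; each statement's English description precedes it below -/
import Mathlib

section
/- If x_0, ..., x_{n-1} are linearly independent points in ℝ^n and r_0, ..., r_{n-1} are real numbers, then there are at most two points z ∈ ℝ^n such that the Euclidean distance d(x_i, z) = r_i holds for all i < n. -/
open RealInnerProductSpace

private lemma aux_inj (n : ℕ) (x : Fin n → EuclideanSpace ℝ (Fin n))
    (hx : LinearIndependent ℝ x) (v : EuclideanSpace ℝ (Fin n))
    (h : ∀ i, ⟪x i, v⟫ = 0) : v = 0 := by
  have hspan : Submodule.span ℝ (Set.range x) = ⊤ := by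
    apply Submodule.eq_top_of_finrank_eq
    rw [finrank_span_eq_card hx]
    simp [finrank_euclideanSpace_fin]
  have hv : v ∈ Submodule.span ℝ (Set.range x) := hspan ▸ Submodule.mem_top
  obtain ⟨c, hc⟩ := (Finsupp.mem_span_range_iff_exists_finsupp).1 hv
  have : ⟪v, v⟫ = 0 := by
    have : ⟪v, v⟫ = ⟪(c.sum fun i a => a • x i : EuclideanSpace ℝ (Fin n)), v⟫ := by rw [hc]
    rw [this, Finsupp.sum, sum_inner]
    simp only [real_inner_smul_left]
    refine Finset.sum_eq_zero fun i _ => ?_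
    rw [h i, mul_zero]
  exact inner_self_eq_zero.mp this

/-- If `x 0, ..., x (n-1)` are linearly independent points of `ℝ^n` and `r i` are reals,
then there are at most two points `z` with `dist (x i) z = r i` for all `i`. -/
theorem stmt_0 (n : ℕ) (x : Fin n → EuclideanSpace ℝ (Fin n))
    (hx : LinearIndependent ℝ x) (r : Fin n → ℝ) :
    ∃ a b : EuclideanSpace ℝ (Fin n),
      {z : EuclideanSpace ℝ (Fin n) | ∀ i, dist (x i) z = r i} ⊆ {a, b} := by
  set S := {z : EuclideanSpace ℝ (Fin n) | ∀ i, dist (x i) z = r i} with hS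
  by_cases hex : ∃ a ∈ S, ∃ b ∈ S, a ≠ b
  swap
  · push_neg at hex
    by_cases hne : S.Nonempty
    · obtain ⟨a, ha⟩ := hne
      exact ⟨a, a, fun z hz => by simp [hex z hz a ha]⟩
    · exact ⟨0, 0, fun z hz => absurd ⟨z, hz⟩ hne⟩
  obtain ⟨a, ha, b, hb, hab⟩ := hex
  -- n must be positive since a ≠ b
  rcases Nat.eq_zero_or_pos n with hn | hn
  · exfalso; subst hn; exact hab (Subsingleton.elim a b)
  refine ⟨a, b, fun c hc => ?_⟩
  -- key: inner products of x i with differences of solutions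
  have key : ∀ z ∈ S, ∀ w ∈ S, ∀ i, ⟪x i, z - w⟫ = (‖z‖^2 - ‖w‖^2) / 2 := by
    intro z hz w hw i
    have hz' : ‖x i - z‖^2 = r i ^ 2 := by rw [← dist_eq_norm]; rw [hz i]
    have hw' : ‖x i - w‖^2 = r i ^ 2 := by rw [← dist_eq_norm]; rw [hw i]
    rw [norm_sub_sq_real] at hz' hw'
    rw [inner_sub_right]
    linarith
  -- ‖a‖² ≠ ‖b‖²
  have hne : ‖a‖^2 ≠ ‖b‖^2 := by
    intro h
    apply hab
    have : a - b = 0 := by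
      apply aux_inj n x hx
      intro i
      rw [key a ha b hb i, h]; ring
    rwa [sub_eq_zero] at this
  -- a - c = t • (a - b)
  set t : ℝ := (‖a‖^2 - ‖c‖^2) / (‖a‖^2 - ‖b‖^2) with ht
  have hlin : a - c = t • (a - b) := by
    have hv : ((‖a‖^2 - ‖b‖^2) • (a - c) - (‖a‖^2 - ‖c‖^2) • (a - b) : EuclideanSpace ℝ (Fin n)) = 0 := by
      apply aux_inj n x hx
      intro i
      rw [inner_sub_right, real_inner_smul_right, real_inner_smul_right,
        key a ha c hc i, key a ha b hb i]
      ring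
    have hsub : ((‖a‖^2 - ‖b‖^2) • (a - c) : EuclideanSpace ℝ (Fin n))
        = (‖a‖^2 - ‖c‖^2) • (a - b) := by rwa [sub_eq_zero] at hv
    have hd : (‖a‖^2 - ‖b‖^2) ≠ 0 := sub_ne_zero.mpr hne
    calc a - c = ((‖a‖^2 - ‖b‖^2)⁻¹ * (‖a‖^2 - ‖b‖^2)) • (a - c) := by
          rw [inv_mul_cancel₀ hd, one_smul]
      _ = (‖a‖^2 - ‖b‖^2)⁻¹ • ((‖a‖^2 - ‖b‖^2) • (a - c)) := by rw [mul_smul]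
      _ = (‖a‖^2 - ‖b‖^2)⁻¹ • ((‖a‖^2 - ‖c‖^2) • (a - b)) := by rw [hsub]
      _ = t • (a - b) := by rw [← mul_smul, ht]; ring_nf
  -- the quadratic argument using the sphere around x i0
  set i0 : Fin n := ⟨0, hn⟩
  set p : EuclideanSpace ℝ (Fin n) := x i0 with hp
  set u : EuclideanSpace ℝ (Fin n) := a - b with hu
  have sphere : ∀ z ∈ S, ‖p - z‖^2 = r i0 ^ 2 := by
    intro z hz
    rw [← dist_eq_norm, hz i0]
  have norm_expand : ∀ (s : ℝ), ‖p - (a - s • u)‖^2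
      = ‖p - a‖^2 + 2*(s*⟪p - a, u⟫) + s^2*‖u‖^2 := by
    intro s
    have : p - (a - s • u) = (p - a) + s • u := by abel
    rw [this, norm_add_sq_real, real_inner_smul_right, norm_smul]
    simp [mul_pow]
  have e0 : ‖p - a‖^2 = r i0 ^ 2 := sphere a ha
  have e1 : ‖p - a‖^2 + 2*(1*⟪p - a, u⟫) + 1^2*‖u‖^2 = r i0 ^ 2 := by
    rw [← norm_expand 1]
    have : a - (1:ℝ) • u = b := by rw [one_smul, hu]; abel
    rw [this]; exact sphere b hb
  have ec : ‖p - a‖^2 + 2*(t*⟪p - a, u⟫) + t^2*‖u‖^2 = r i0 ^ 2 := by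
    rw [← norm_expand t]
    have : a - t • u = c := by rw [← hlin]; abel
    rw [this]; exact sphere c hc
  have hu0 : ‖u‖^2 ≠ 0 := by
    simp only [pow_eq_zero_iff, ne_eq, norm_eq_zero]
    intro h
    exact hab (sub_eq_zero.mp (by simpa [hu] using h))
  have hinner : ⟪p - a, u⟫ = -‖u‖^2 / 2 := by linarith
  have hq : ‖u‖^2 * (t * (t - 1)) = 0 := by
    rw [hinner] at ec
    nlinarith [ec, e0]
  have ht01 : t = 0 ∨ t = 1 := by
    rcases mul_eq_zero.mp hq with h | h
    · exact absurd h hu0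
    · rcases mul_eq_zero.mp h with h | h
      · exact Or.inl h
      · exact Or.inr (by linarith)
  rcases ht01 with h | h
  · left
    have : a - c = 0 := by rw [hlin, h, zero_smul]
    exact (sub_eq_zero.mp this).symm
  · right
    have : a - c = a - b := by rw [hlin, h, one_smul, hu]
    exact Set.mem_singleton_iff.mpr (sub_right_inj.mp this)
end

section
/- Let n ≥ 1. The Zariski topology of algebraic sets on ℝ^n has Krull dimension n, i.e., the supremum of lengths of finite chains of nonempty irreducible closed sets strictly ordered by inclusion, minus one, equals n. -/
open MvPolynomial

/-- An algebraic subset of `ℝ^n`: the common zero set of a set of real polynomials. -/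
def IsAlgebraicSet (n : ℕ) (A : Set (Fin n → ℝ)) : Prop :=
  ∃ S : Set (MvPolynomial (Fin n) ℝ), A = {x | ∀ p ∈ S, MvPolynomial.eval x p = 0}

/-- Irreducibility with respect to the topology of algebraic sets: nonempty, and not a
union of two algebraic proper subsets. -/
def IsAlgIrreducible (n : ℕ) (A : Set (Fin n → ℝ)) : Prop :=
  A.Nonempty ∧ ∀ B C : Set (Fin n → ℝ), IsAlgebraicSet n B → IsAlgebraicSet n C →
    B ⊂ A → C ⊂ A → A ≠ B ∪ C

/-!
Via vanishing ideals, irreducible algebraic subsets of `ℝⁿ` are exactly the algebraic sets whose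
vanishing ideal is prime, and a strict inclusion of algebraic sets reverses to a strict inclusion
of ideals. A chain of `m + 1` irreducible algebraic sets therefore gives a chain of `m + 1` primes
in `ℝ[X₁, …, Xₙ]`, so `m ≤ n` by the Krull dimension of the polynomial ring. Conversely the
coordinate subspaces `ℝ⁰ ⊂ ℝ¹ ⊂ ⋯ ⊂ ℝⁿ` form a chain of length `n`: the vanishing ideal of `ℝⁱ`
is the kernel of the substitution `Xⱼ ↦ 0` for `j ≥ i`, a map into a domain, hence prime.
-/

variable {n : ℕ} {A B : Set (Fin n → ℝ)}

theorem IsAlgebraicSet.zeroLocus_vanishingIdeal (hA : IsAlgebraicSet n A) :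
    zeroLocus ℝ (vanishingIdeal ℝ A) = A := by
  obtain ⟨S, rfl⟩ := hA
  have hspan : zeroLocus ℝ (Ideal.span S) = {x | ∀ p ∈ S, eval x p = 0} := zeroLocus_span S
  rw [← hspan]
  exact zeroLocus_vanishingIdeal_galoisConnection.l_u_l_eq_l _

theorem IsAlgebraicSet.sep_eval_eq_zero (hA : IsAlgebraicSet n A) (p : MvPolynomial (Fin n) ℝ) :
    IsAlgebraicSet n {x ∈ A | eval x p = 0} := by
  obtain ⟨S, rfl⟩ := hA
  refine ⟨insert p S, ?_⟩
  ext x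
  simp only [Set.mem_ofPred_eq, Set.mem_insert_iff, forall_eq_or_imp]
  exact and_comm

theorem IsAlgebraicSet.vanishingIdeal_lt_of_ssubset (hB : IsAlgebraicSet n B) (h : B ⊂ A) :
    vanishingIdeal ℝ A < vanishingIdeal ℝ B := by
  refine (vanishingIdeal_anti_mono h.subset).lt_of_ne fun heq => h.not_subset ?_
  rw [← hB.zeroLocus_vanishingIdeal, ← heq]
  exact zeroLocus_vanishingIdeal_le A

theorem isAlgIrreducible_iff_isPrime_vanishingIdeal (hA : IsAlgebraicSet n A) :
    IsAlgIrreducible n A ↔ (vanishingIdeal ℝ A).IsPrime := by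
  constructor
  · rintro ⟨⟨a, ha⟩, hirr⟩
    refine Ideal.isPrime_iff.mpr ⟨fun htop => ?_, fun {p q} hpq => ?_⟩
    · have h1 : (1 : MvPolynomial (Fin n) ℝ) ∈ vanishingIdeal ℝ A := htop ▸ Submodule.mem_top
      simpa using h1 a ha
    by_contra! ⟨hp, hq⟩
    refine hirr _ _ (hA.sep_eval_eq_zero p) (hA.sep_eval_eq_zero q)
      ((Set.sep_subset _ _).ssubset_of_ne fun h => hp fun x hx => ?_)
      ((Set.sep_subset _ _).ssubset_of_ne fun h => hq fun x hx => ?_) ?_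
    · exact (h.ge hx).2
    · exact (h.ge hx).2
    · ext x
      simp only [Set.mem_union, Set.mem_ofPred_eq, ← and_or_left]
      refine ⟨fun hx => ⟨hx, ?_⟩, And.left⟩
      simpa using hpq x hx
  · intro hprime
    refine ⟨Set.nonempty_iff_ne_empty.mpr fun h => hprime.ne_top (h ▸ vanishingIdeal_empty),
      fun B C hB hC hBA hCA hunion => ?_⟩
    obtain ⟨p, hpB, hpA⟩ := SetLike.exists_of_lt (hB.vanishingIdeal_lt_of_ssubset hBA)
    obtain ⟨q, hqC, hqA⟩ := SetLike.exists_of_lt (hC.vanishingIdeal_lt_of_ssubset hCA)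
    have hpq : p * q ∈ vanishingIdeal ℝ A := by
      rw [hunion]
      rintro x (hx | hx)
      · rw [map_mul, hpB x hx, zero_mul]
      · rw [map_mul, hqC x hx, mul_zero]
    exact (hprime.mem_or_mem hpq).elim hpA hqA

theorem length_le_of_strictMono_isAlgIrreducible {m : ℕ} (C : Fin (m + 1) → Set (Fin n → ℝ))
    (hC : StrictMono C) (h : ∀ i, IsAlgebraicSet n (C i) ∧ IsAlgIrreducible n (C i)) :
    m ≤ n := by
  let P : Fin (m + 1) → PrimeSpectrum (MvPolynomial (Fin n) ℝ) := fun i =>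
    ⟨vanishingIdeal ℝ (C i.rev), (isAlgIrreducible_iff_isPrime_vanishingIdeal (h _).1).mp (h _).2⟩
  have hP : StrictMono P := fun i j hij =>
    (h _).1.vanishingIdeal_lt_of_ssubset (hC (Fin.rev_lt_rev.mpr hij))
  have hdim : (m : WithBot ℕ∞) ≤ n :=
    calc (m : WithBot ℕ∞) ≤ ringKrullDim (MvPolynomial (Fin n) ℝ) :=
          Order.LTSeries.length_le_krullDim (LTSeries.mk m P hP)
      _ = n := by simp
  exact_mod_cast hdim

def coordSubspace (n i : ℕ) : Set (Fin n → ℝ) := {x | ∀ j : Fin n, i ≤ j → x j = 0}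

theorem isAlgebraicSet_coordSubspace (n i : ℕ) : IsAlgebraicSet n (coordSubspace n i) := by
  refine ⟨X '' {j | i ≤ j}, ?_⟩
  ext x
  simp [coordSubspace]

theorem coordSubspace_ssubset {i j : ℕ} (hij : i < j) (hjn : j ≤ n) :
    coordSubspace n i ⊂ coordSubspace n j := by
  refine ⟨fun x hx k hk => hx k (hij.le.trans hk), fun hsub => ?_⟩
  have hmem : Pi.single (⟨i, hij.trans_le hjn⟩ : Fin n) (1 : ℝ) ∈ coordSubspace n j := by
    intro k hk
    exact Pi.single_eq_of_ne (fun h => by simp [h] at hk; omega) _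
  simpa using hsub hmem ⟨i, hij.trans_le hjn⟩ le_rfl

def coordTruncate (i : ℕ) (x : Fin n → ℝ) : Fin n → ℝ := fun j => if (j : ℕ) < i then x j else 0

theorem coordTruncate_mem_coordSubspace (i : ℕ) (x : Fin n → ℝ) :
    coordTruncate i x ∈ coordSubspace n i :=
  fun _ hj => if_neg (not_lt.mpr hj)

theorem coordTruncate_eq_self {i : ℕ} {x : Fin n → ℝ} (hx : x ∈ coordSubspace n i) :
    coordTruncate i x = x := by
  funext j
  by_cases hj : (j : ℕ) < i
  · exact if_pos hj
  · exact (if_neg hj).trans (hx j (not_lt.mp hj)).symm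

noncomputable def coordTruncateAlgHom (n i : ℕ) :
    MvPolynomial (Fin n) ℝ →ₐ[ℝ] MvPolynomial (Fin n) ℝ :=
  aeval fun j => if (j : ℕ) < i then X j else 0

theorem eval_coordTruncateAlgHom (i : ℕ) (x : Fin n → ℝ) (p : MvPolynomial (Fin n) ℝ) :
    eval x (coordTruncateAlgHom n i p) = eval (coordTruncate i x) p := by
  change aeval x (coordTruncateAlgHom n i p) = aeval (coordTruncate i x) p
  rw [coordTruncateAlgHom, comp_aeval_apply]
  congr 2
  funext j
  simp only [coordTruncate]
  split_ifs <;> simp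

theorem vanishingIdeal_coordSubspace (n i : ℕ) :
    vanishingIdeal ℝ (coordSubspace n i) = RingHom.ker (coordTruncateAlgHom n i) := by
  ext p
  rw [RingHom.mem_ker, mem_vanishingIdeal_iff]
  constructor
  · intro hp
    refine MvPolynomial.funext fun x => ?_
    rw [eval_coordTruncateAlgHom, map_zero]
    exact hp _ (coordTruncate_mem_coordSubspace i x)
  · intro hp x hx
    change eval x p = 0
    rw [← coordTruncate_eq_self hx, ← eval_coordTruncateAlgHom, hp, map_zero]

theorem isAlgIrreducible_coordSubspace (n i : ℕ) : IsAlgIrreducible n (coordSubspace n i) := by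
  rw [isAlgIrreducible_iff_isPrime_vanishingIdeal (isAlgebraicSet_coordSubspace n i),
    vanishingIdeal_coordSubspace]
  exact RingHom.ker_isPrime _

theorem stmt_3_general (n : ℕ) :
    (∃ C : Fin (n + 1) → Set (Fin n → ℝ), StrictMono C ∧
      ∀ i, IsAlgebraicSet n (C i) ∧ IsAlgIrreducible n (C i)) ∧
    ¬ (∃ C : Fin (n + 2) → Set (Fin n → ℝ), StrictMono C ∧
      ∀ i, IsAlgebraicSet n (C i) ∧ IsAlgIrreducible n (C i)) := by
  refine ⟨⟨fun i => coordSubspace n i, fun i j hij => coordSubspace_ssubset hij (Fin.is_le j),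
    fun i => ⟨isAlgebraicSet_coordSubspace n i, isAlgIrreducible_coordSubspace n i⟩⟩, ?_⟩
  rintro ⟨C, hC, h⟩
  exact n.not_succ_le_self (length_le_of_strictMono_isAlgIrreducible (m := n + 1) C hC h)

/-- The Zariski topology of algebraic sets on `ℝ^n` has Krull dimension `n`: there is a
strictly increasing chain of `n+1` nonempty irreducible algebraic sets, but none of
`n+2` such sets. -/
theorem stmt_3 (n : ℕ) (hn : 1 ≤ n) :
    (∃ C : Fin (n + 1) → Set (Fin n → ℝ), StrictMono C ∧
      ∀ i, IsAlgebraicSet n (C i) ∧ IsAlgIrreducible n (C i)) ∧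
    ¬ (∃ C : Fin (n + 2) → Set (Fin n → ℝ), StrictMono C ∧
      ∀ i, IsAlgebraicSet n (C i) ∧ IsAlgIrreducible n (C i)) :=
  stmt_3_general n
end

section
/- Let X, Y be topological spaces, f : X → Y a continuous open map, and let a ⊆ b be nonempty finite index sets. Let X^b/f denote the subspace of X^b of tuples x with f(x(i)) equal for all i ∈ b, and similarly X^a/f. Then the projection map π : X^b/f → X^a/f restricting tuples to coordinates in a is an open map. -/
/-- For a continuous open map `f : X → Y` and nonempty finite index sets `a ⊆ b`, the
projection from `X^b/f` (tuples with constant `f`-value) to `X^a/f` is an open map. -/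
theorem stmt_8 {X Y : Type*} [TopologicalSpace X] [TopologicalSpace Y]
    (f : X → Y) (hfc : Continuous f) (hfo : IsOpenMap f)
    {ι : Type*} (a b : Finset ι) (ha : a.Nonempty) (hab : a ⊆ b) :
    IsOpenMap (fun x : {x : b → X // ∀ i j : b, f (x i) = f (x j)} =>
      (⟨fun i => x.1 ⟨i.1, hab i.2⟩, fun i j => x.2 _ _⟩ :
        {x : a → X // ∀ i j : a, f (x i) = f (x j)})) := by
  classical
  intro U hU
  obtain ⟨W, hW, rfl⟩ := isOpen_induced_iff.mp hU
  rw [isOpen_iff_forall_mem_open]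
  rintro y ⟨x, hxU, rfl⟩
  obtain ⟨I, u, hu, hIu⟩ := isOpen_pi_iff.mp hW x.1 hxU
  set i0 : a := ⟨ha.choose, ha.choose_spec⟩ with hi0
  refine ⟨{z : {x : a → X // ∀ i j : a, f (x i) = f (x j)} |
      ∀ j ∈ I, if h : (j : ι) ∈ a then z.1 ⟨j.1, h⟩ ∈ u j
      else f (z.1 i0) ∈ f '' u j}, ?_, ?_, ?_⟩
  · -- subset of image
    rintro z hz
    have hz' : ∀ j ∈ I, (j : ι) ∉ a → ∃ w ∈ u j, f w = f (z.1 i0) := by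
      intro j hj h
      have := hz j hj
      rw [dif_neg h] at this
      exact this
    choose! w hw hfw using hz'
    set x' : {x // x ∈ b} → X := fun j =>
      if h : (j : ι) ∈ a then z.1 ⟨j.1, h⟩
      else if hj : j ∈ I then w j hj h else z.1 i0 with hx'
    have hfx' : ∀ j : b, f (x' j) = f (z.1 i0) := by
      intro j
      by_cases h : (j : ι) ∈ a
      · simp only [hx', dif_pos h]
        exact z.2 ⟨j.1, h⟩ i0
      · by_cases hj : j ∈ I
        · simp only [hx', dif_neg h, dif_pos hj]
          exact hfw j hj h
        · simp only [hx', dif_neg h, dif_neg hj]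
    have hx'prop : ∀ i j : b, f (x' i) = f (x' j) := fun i j =>
      (hfx' i).trans (hfx' j).symm
    have hmem : x' ∈ W := by
      apply hIu
      intro j hj
      replace hj : j ∈ I := hj
      by_cases h : (j : ι) ∈ a
      · have := hz j hj
        rw [dif_pos h] at this
        simpa only [hx', dif_pos h] using this
      · simp only [hx', dif_neg h, dif_pos hj]
        exact hw j hj h
    refine ⟨⟨x', hx'prop⟩, hmem, ?_⟩
    apply Subtype.ext
    funext i
    show x' ⟨i.1, hab i.2⟩ = z.1 i
    simp only [hx', dif_pos i.2]
  · -- openness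
    have : {z : {x : a → X // ∀ i j : a, f (x i) = f (x j)} |
        ∀ j ∈ I, if h : (j : ι) ∈ a then z.1 ⟨j.1, h⟩ ∈ u j
        else f (z.1 i0) ∈ f '' u j} =
        ⋂ j ∈ I, {z : {x : a → X // ∀ i j : a, f (x i) = f (x j)} |
          if h : (j : ι) ∈ a then z.1 ⟨j.1, h⟩ ∈ u j
          else f (z.1 i0) ∈ f '' u j} := by
      ext z; simp
    rw [this]
    apply isOpen_biInter_finset
    intro j hj
    by_cases h : (j : ι) ∈ a
    · simp only [dif_pos h]
      exact ((continuous_apply _).comp continuous_subtype_val).isOpen_preimage _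
        (hu j hj).1
    · simp only [dif_neg h]
      exact (hfc.comp ((continuous_apply _).comp continuous_subtype_val)).isOpen_preimage
        _ (hfo _ (hu j hj).1)
  · -- membership
    intro j hj
    by_cases h : (j : ι) ∈ a
    · rw [dif_pos h]
      exact (hu j hj).2
    · rw [dif_neg h]
      exact ⟨x.1 j, (hu j hj).2, x.2 j ⟨i0.1, hab i0.2⟩⟩
end

section
/- Fix n ≥ 2. Suppose x_0, ..., x_{n-1} ∈ ℝ^n are linearly independent, and y_0, ..., y_{n-1}, z ∈ ℝ^n satisfy (x_i − z) · (y_i − z) = 0 for all i. If the midpoints w_i = (x_i + y_i)/2 are linearly independent, then there are at most two points z' ∈ ℝ^n satisfying (x_i − z') · (y_i − z') = 0 for all i < n. -/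
open RealInnerProductSpace

/-- If `x 0, ..., x (n-1)` are linearly independent, `z` satisfies the right-angle
conditions `(x i - z) ⬝ (y i - z) = 0`, and the midpoints of the segments `[x i, y i]`
are linearly independent, then there are at most two points `z'` satisfying all the
right-angle conditions. -/
theorem stmt_11 (n : ℕ) (hn : 2 ≤ n) (x y : Fin n → EuclideanSpace ℝ (Fin n))
    (z : EuclideanSpace ℝ (Fin n))
    (hx : LinearIndependent ℝ x)
    (hz : ∀ i, ⟪x i - z, y i - z⟫ = 0)
    (hw : LinearIndependent ℝ (fun i => midpoint ℝ (x i) (y i))) :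
    ∃ a b : EuclideanSpace ℝ (Fin n),
      {z' : EuclideanSpace ℝ (Fin n) | ∀ i, ⟪x i - z', y i - z'⟫ = 0} ⊆ {a, b} := by
  classical
  set w : Fin n → EuclideanSpace ℝ (Fin n) := fun i => midpoint ℝ (x i) (y i) with hwdef
  have hne : Nonempty (Fin n) := ⟨⟨0, by omega⟩⟩
  -- the linear map v ↦ (⟪w i, v⟫)
  let L : EuclideanSpace ℝ (Fin n) →ₗ[ℝ] (Fin n → ℝ) :=
    LinearMap.pi fun i => ((innerSL ℝ (w i)) : EuclideanSpace ℝ (Fin n) →ₗ[ℝ] ℝ)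
  have hLapp : ∀ v i, L v i = ⟪w i, v⟫ := fun v i => rfl
  -- w is a basis
  have hcard : Fintype.card (Fin n) = Module.finrank ℝ (EuclideanSpace ℝ (Fin n)) := by
    simp [finrank_euclideanSpace_fin]
  let B := basisOfLinearIndependentOfCardEqFinrank hw hcard
  have hB : ⇑B = w := coe_basisOfLinearIndependentOfCardEqFinrank hw hcard
  have hinj : Function.Injective L := by
    rw [← LinearMap.ker_eq_bot, Submodule.eq_bot_iff]
    intro v hv
    have h1 : ∀ i, ⟪w i, v⟫ = 0 := fun i => congrFun hv i
    have h2 : ∀ u : EuclideanSpace ℝ (Fin n), ⟪u, v⟫ = 0 := by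
      intro u
      rw [← Module.Basis.sum_repr B u, sum_inner]
      refine Finset.sum_eq_zero fun i _ => ?_
      rw [real_inner_smul_left, hB, h1 i, mul_zero]
    exact inner_self_eq_zero.mp (h2 v)
  have hsurj : Function.Surjective L := by
    rw [← LinearMap.injective_iff_surjective_of_finrank_eq_finrank (by
      simp [finrank_euclideanSpace_fin])]
    exact hinj
  obtain ⟨p, hp⟩ := hsurj (fun i => ⟪x i, y i⟫ / 2)
  obtain ⟨q, hq⟩ := hsurj (fun i => (1:ℝ) / 2)
  have hpi : ∀ i, ⟪w i, p⟫ = ⟪x i, y i⟫ / 2 := fun i => congrFun hp i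
  have hqi : ∀ i, ⟪w i, q⟫ = 1 / 2 := fun i => congrFun hq i
  have hq0 : q ≠ 0 := by
    intro h
    have := hqi ⟨0, by omega⟩
    rw [h, inner_zero_right] at this
    norm_num at this
  -- the key reformulation
  have key : ∀ (z' : EuclideanSpace ℝ (Fin n)) (i : Fin n), ⟪x i - z', y i - z'⟫ =
      ‖z'‖^2 - 2 * ⟪w i, z'⟫ + ⟪x i, y i⟫ := by
    intro z' i
    have : ⟪w i, z'⟫ = (⟪x i, z'⟫ + ⟪y i, z'⟫) / 2 := by
      rw [hwdef]
      simp only [midpoint_eq_smul_add, smul_add, inner_add_left, real_inner_smul_left,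
        invOf_eq_inv]
      ring
    rw [this]
    simp only [inner_sub_left, inner_sub_right, real_inner_self_eq_norm_sq]
    rw [real_inner_comm z' (x i), real_inner_comm z' (y i)]
    ring
  -- each solution equals p + t • q with t = ‖z'‖²
  have hform : ∀ z' : EuclideanSpace ℝ (Fin n),
      (∀ i, ⟪x i - z', y i - z'⟫ = 0) → z' = p + ‖z'‖^2 • q := by
    intro z' hz'
    apply hinj
    funext i
    rw [hLapp, hLapp, inner_add_right, real_inner_smul_right, hpi, hqi]
    have := key z' i
    rw [hz' i] at this
    nlinarith [this]
  -- quadratic coefficients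
  set A : ℝ := ‖q‖^2 with hA
  set Bc : ℝ := 2 * ⟪p, q⟫ - 1 with hBc
  set C : ℝ := ‖p‖^2 with hC
  have hAne : A ≠ 0 := by
    simpa [hA, pow_eq_zero_iff] using hq0
  have hquad : ∀ z' : EuclideanSpace ℝ (Fin n), (∀ i, ⟪x i - z', y i - z'⟫ = 0) →
      A * (‖z'‖^2 * ‖z'‖^2) + Bc * ‖z'‖^2 + C = 0 := by
    intro z' hz'
    have h1 := hform z' hz'
    have h2 : ‖z'‖^2 = ‖p + ‖z'‖^2 • q‖^2 := by rw [← h1]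
    rw [norm_add_sq_real, real_inner_smul_right, norm_smul] at h2
    simp only [norm_pow, Real.norm_eq_abs, mul_pow, sq_abs] at h2
    rw [hA, hBc, hC]
    nlinarith [h2]
  by_cases hd : 0 ≤ discrim A Bc C
  · set s := Real.sqrt (discrim A Bc C) with hs
    have hsq : discrim A Bc C = s * s := (Real.mul_self_sqrt hd).symm
    refine ⟨p + ((-Bc + s) / (2 * A)) • q, p + ((-Bc - s) / (2 * A)) • q, ?_⟩
    intro z' hz'
    have hz'' : ∀ i, ⟪x i - z', y i - z'⟫ = 0 := hz'
    have h1 := hform z' hz''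
    have h2 := (quadratic_eq_zero_iff hAne hsq (‖z'‖^2)).mp (hquad z' hz'')
    rcases h2 with h | h
    · left; rw [h1, h]
    · right; rw [h1, h]; rfl
  · refine ⟨0, 0, fun z' hz' => absurd (hquad z' hz') ?_⟩
    apply quadratic_ne_zero_of_discrim_ne_sq
    intro s hs
    nlinarith [sq_nonneg s, hs]
end

section
/- Let F ⊆ ℝ be a subfield and let {x_0, x_1, x_2, x_3} ⊆ ℝ^n be a rectangle with x_0, x_1 ∈ F^n. Then either both x_2 and x_3 belong to F^n, or neither of them does. -/
/-!
Only the diagonal relation of a rectangle matters: in each pairing of opposite vertices,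
`x₂ + x₃` or `±(x₂ - x₃)` equals `x₀ + x₁` or `x₁ - x₀`, which lies in the additive subgroup
`F^n`, and a subgroup contains one summand (or difference term) exactly when it contains
the other.
-/

open RealInnerProductSpace

/-- `IsRectangle x₀ x₁ x₂ x₃` : the four points form a Euclidean rectangle where `x₀`
and `x₁` are opposite vertices and `x₂`, `x₃` are opposite vertices. -/
def IsRectangle {n : ℕ} (x₀ x₁ x₂ x₃ : EuclideanSpace ℝ (Fin n)) : Prop :=
  x₀ + x₁ = x₂ + x₃ ∧ ⟪x₂ - x₀, x₃ - x₀⟫ = 0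

section AddSubgroupClass

variable {G S : Type*} [AddGroup G] [SetLike S G] [AddSubgroupClass S G] {s : S} {a b : G}

theorem mem_iff_mem_of_add_mem (h : a + b ∈ s) : a ∈ s ↔ b ∈ s :=
  ⟨fun ha => (add_mem_cancel_left ha).mp h, fun hb => (add_mem_cancel_right hb).mp h⟩

theorem mem_iff_mem_of_sub_mem (h : a - b ∈ s) : a ∈ s ↔ b ∈ s :=
  (mem_iff_mem_of_add_mem (sub_eq_add_neg a b ▸ h)).trans neg_mem_iff

end AddSubgroupClass

def Subfield.euclideanPoints (F : Subfield ℝ) (ι : Type*) :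
    AddSubgroup (EuclideanSpace ℝ ι) where
  carrier := {x | ∀ i, x i ∈ F}
  add_mem' hx hy i := F.add_mem (hx i) (hy i)
  zero_mem' _ := F.zero_mem
  neg_mem' hx i := F.neg_mem (hx i)

/-- If `{x₀, x₁, x₂, x₃}` is a rectangle (in any of the three possible pairings into
opposite vertices) with `x₀, x₁ ∈ F^n` for a subfield `F ⊆ ℝ`, then either both of
`x₂, x₃` lie in `F^n` or neither does. -/
theorem stmt_13 {n : ℕ} (F : Subfield ℝ) (x₀ x₁ x₂ x₃ : EuclideanSpace ℝ (Fin n))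
    (hrect : IsRectangle x₀ x₁ x₂ x₃ ∨ IsRectangle x₀ x₂ x₁ x₃ ∨
      IsRectangle x₀ x₃ x₁ x₂)
    (h₀ : ∀ i, x₀ i ∈ F) (h₁ : ∀ i, x₁ i ∈ F) :
    ((∀ i, x₂ i ∈ F) ↔ (∀ i, x₃ i ∈ F)) := by
  set P := F.euclideanPoints (Fin n)
  change x₂ ∈ P ↔ x₃ ∈ P
  have hsum : x₀ + x₁ ∈ P := add_mem h₀ h₁
  have hdiff : x₁ - x₀ ∈ P := sub_mem h₁ h₀
  rcases hrect with ⟨h, -⟩ | ⟨h, -⟩ | ⟨h, -⟩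
  · exact mem_iff_mem_of_add_mem (h ▸ hsum)
  · have h₂₃ : x₂ - x₃ = x₁ - x₀ := sub_eq_sub_iff_add_eq_add.mpr (by rw [add_comm, h])
    exact mem_iff_mem_of_sub_mem (h₂₃ ▸ hdiff)
  · have h₃₂ : x₃ - x₂ = x₁ - x₀ := sub_eq_sub_iff_add_eq_add.mpr (by rw [add_comm, h])
    exact (mem_iff_mem_of_sub_mem (h₃₂ ▸ hdiff)).symm
end

section
/- Let F ⊆ ℝ be a subfield and E_F the relation on ℝ^n \ F^n connecting x_0, x_1 if x_0 = x_1 or there exist algebraic sets A_0, A_1 ⊊ ℝ^n defined by polynomials with coefficients in F with x_0 ∈ A_0, x_1 ∈ A_1, and polynomial maps f_0, f_1 : ℝ^n → ℝ^n with coefficients in F such that f_0(x_0) = x_1 and f_1(x_1) = x_0. If {x_0, x_1, x_2, x_3} is a non-degenerate rectangle with x_0, x_1 ∈ F^n and x_2, x_3 ∉ F^n, then x_2 E_F x_3. -/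
open RealInnerProductSpace

/-- An algebraic set visible from `F`: the zero set of a polynomial all of whose
coefficients lie in the subfield `F`. -/
def VisibleAlgSet {n : ℕ} (F : Subfield ℝ) (A : Set (EuclideanSpace ℝ (Fin n))) : Prop :=
  ∃ p : MvPolynomial (Fin n) ℝ, (∀ m, MvPolynomial.coeff m p ∈ F) ∧
    A = {x | MvPolynomial.eval (fun i => x i) p = 0}

/-- A polynomial map `ℝ^n → ℝ^n` visible from `F`: each coordinate function is a
polynomial with coefficients in `F`. -/
def VisiblePolyMap {n : ℕ} (F : Subfield ℝ)
    (f : EuclideanSpace ℝ (Fin n) → EuclideanSpace ℝ (Fin n)) : Prop :=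
  ∃ p : Fin n → MvPolynomial (Fin n) ℝ, (∀ j m, MvPolynomial.coeff m (p j) ∈ F) ∧
    ∀ x j, f x j = MvPolynomial.eval (fun i => x i) (p j)

/-- The relation `E_F`. -/
def EF {n : ℕ} (F : Subfield ℝ) (x y : EuclideanSpace ℝ (Fin n)) : Prop :=
  x = y ∨
    ∃ A B : Set (EuclideanSpace ℝ (Fin n)), VisibleAlgSet F A ∧ VisibleAlgSet F B ∧
      A ≠ Set.univ ∧ B ≠ Set.univ ∧ x ∈ A ∧ y ∈ B ∧
      ∃ f g : EuclideanSpace ℝ (Fin n) → EuclideanSpace ℝ (Fin n),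
        VisiblePolyMap F f ∧ VisiblePolyMap F g ∧ f x = y ∧ g y = x

/-!
If the two `F`-points `x₀, x₁` are opposite vertices, then `x₂` and `x₃` lie on the sphere with
diameter `[x₀, x₁]`, the zero set of `⟪x - x₀, x - x₁⟫`, and are exchanged by the point reflection
`x ↦ x₀ + x₁ - x`. If they are adjacent, then `x₂` and `x₃` lie on the hyperplanes through `x₁` and
`x₀` perpendicular to `x₁ - x₀`, and differ by the translation by `x₁ - x₀`. All of these sets and
maps are defined over `F`.
-/

section Visible

open MvPolynomial

noncomputable def visiblePolyFun (F : Subfield ℝ) (n : ℕ) :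
    Subring (EuclideanSpace ℝ (Fin n) → ℝ) :=
  (RingHom.pi fun x : EuclideanSpace ℝ (Fin n) => eval₂Hom F.subtype fun i => x i).range

variable {n : ℕ} {F : Subfield ℝ}

theorem mem_visiblePolyFun_iff {q : EuclideanSpace ℝ (Fin n) → ℝ} :
    q ∈ visiblePolyFun F n ↔ ∃ p : MvPolynomial (Fin n) ℝ, (∀ m, coeff m p ∈ F) ∧
      ∀ x, q x = eval (fun i => x i) p := by
  constructor
  · rintro ⟨p, rfl⟩
    exact ⟨map F.subtype p, fun m => by rw [coeff_map]; exact SetLike.coe_mem _,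
      fun x => by simp⟩
  · rintro ⟨p, hp, hq⟩
    obtain ⟨p, rfl⟩ := (mem_range_map_iff_coeffs_subset (f := F.subtype)).2 fun c hc => by
      obtain ⟨m, -, rfl⟩ := mem_coeffs_iff.1 hc
      exact ⟨⟨_, hp m⟩, rfl⟩
    exact ⟨p, funext fun x => by simp [hq]⟩

theorem visiblePolyMap_iff {f : EuclideanSpace ℝ (Fin n) → EuclideanSpace ℝ (Fin n)} :
    VisiblePolyMap F f ↔ ∀ j, (fun x => f x j) ∈ visiblePolyFun F n := by
  simp only [mem_visiblePolyFun_iff]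
  constructor
  · rintro ⟨p, hp, hf⟩ j
    exact ⟨p j, hp j, (hf · j)⟩
  · intro h
    choose p hp hf using h
    exact ⟨p, hp, fun x j => hf j x⟩

theorem visibleAlgSet_setOf_eq_zero {q : EuclideanSpace ℝ (Fin n) → ℝ}
    (hq : q ∈ visiblePolyFun F n) : VisibleAlgSet F {x | q x = 0} := by
  obtain ⟨p, hp, hq⟩ := mem_visiblePolyFun_iff.1 hq
  exact ⟨p, hp, by simp only [hq]⟩

variable (F) in
theorem visiblePolyMap_id : VisiblePolyMap F fun x : EuclideanSpace ℝ (Fin n) => x :=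
  visiblePolyMap_iff.2 fun j => ⟨X j, funext fun x => by simp⟩

theorem visiblePolyMap_const {v : EuclideanSpace ℝ (Fin n)} (hv : ∀ i, v i ∈ F) :
    VisiblePolyMap F fun _ => v :=
  visiblePolyMap_iff.2 fun j => ⟨C ⟨v j, hv j⟩, funext fun x => by simp⟩

theorem VisiblePolyMap.add {f g : EuclideanSpace ℝ (Fin n) → EuclideanSpace ℝ (Fin n)}
    (hf : VisiblePolyMap F f) (hg : VisiblePolyMap F g) : VisiblePolyMap F fun x => f x + g x :=
  visiblePolyMap_iff.2 fun j => add_mem (visiblePolyMap_iff.1 hf j) (visiblePolyMap_iff.1 hg j)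

theorem VisiblePolyMap.sub {f g : EuclideanSpace ℝ (Fin n) → EuclideanSpace ℝ (Fin n)}
    (hf : VisiblePolyMap F f) (hg : VisiblePolyMap F g) : VisiblePolyMap F fun x => f x - g x :=
  visiblePolyMap_iff.2 fun j => sub_mem (visiblePolyMap_iff.1 hf j) (visiblePolyMap_iff.1 hg j)

theorem inner_mem_visiblePolyFun {f g : EuclideanSpace ℝ (Fin n) → EuclideanSpace ℝ (Fin n)}
    (hf : VisiblePolyMap F f) (hg : VisiblePolyMap F g) :
    (fun x => ⟪f x, g x⟫) ∈ visiblePolyFun F n := by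
  have h : (fun x => ⟪f x, g x⟫) = ∑ j, (fun x => g x j) * fun x => f x j := by
    ext x
    simp [PiLp.inner_apply]
  rw [h]
  exact sum_mem fun j _ => mul_mem (visiblePolyMap_iff.1 hg j) (visiblePolyMap_iff.1 hf j)

end Visible

section Geometry

variable {E : Type*} [NormedAddCommGroup E] [InnerProductSpace ℝ E]

theorem setOf_inner_sub_sub_eq_zero_ne_univ {a b : E} (hab : a ≠ b) :
    {x : E | ⟪x - a, x - b⟫ = 0} ≠ Set.univ := by
  refine (Set.ne_univ_iff_exists_notMem _).2 ⟨a + (a - b), fun h => ?_⟩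
  have h2 : (a + (a - b)) - b = (2 : ℝ) • (a - b) := by module
  rw [Set.mem_ofPred_eq, add_sub_cancel_left, h2, real_inner_smul_right,
    real_inner_self_eq_norm_sq] at h
  have : a - b ≠ 0 := sub_ne_zero.2 hab
  have : 0 < ‖a - b‖ ^ 2 := by positivity
  linarith

theorem setOf_inner_sub_eq_zero_ne_univ {u : E} (hu : u ≠ 0) (a : E) :
    {x : E | ⟪x - a, u⟫ = 0} ≠ Set.univ := by
  refine (Set.ne_univ_iff_exists_notMem _).2 ⟨a + u, fun h => hu ?_⟩
  rw [Set.mem_ofPred_eq, add_sub_cancel_left] at h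
  exact inner_self_eq_zero.1 h

end Geometry

section Rectangle

variable {n : ℕ} {F : Subfield ℝ}

theorem EF.symm {x y : EuclideanSpace ℝ (Fin n)} (h : EF F x y) : EF F y x := by
  rcases h with rfl | ⟨A, B, hA, hB, hAu, hBu, hx, hy, f, g, hf, hg, hfx, hgy⟩
  · exact Or.inl rfl
  · exact Or.inr ⟨B, A, hB, hA, hBu, hAu, hy, hx, g, f, hg, hf, hgy, hfx⟩

variable {a b y z : EuclideanSpace ℝ (Fin n)}

theorem EF.of_isRectangle_of_opposite (ha : ∀ i, a i ∈ F) (hb : ∀ i, b i ∈ F) (hab : a ≠ b)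
    (h : IsRectangle a b y z) : EF F y z := by
  obtain ⟨hsum, horth⟩ := h
  have hy : y - b = -(z - a) := by linear_combination (norm := module) (-1 : ℝ) • hsum
  have hz : z - b = -(y - a) := by linear_combination (norm := module) (-1 : ℝ) • hsum
  have hsphere := visibleAlgSet_setOf_eq_zero <| inner_mem_visiblePolyFun
    ((visiblePolyMap_id F).sub (visiblePolyMap_const ha))
    ((visiblePolyMap_id F).sub (visiblePolyMap_const hb))
  have hreflect := (visiblePolyMap_const (v := a + b) fun i => add_mem (ha i) (hb i)).sub
    (visiblePolyMap_id F)
  have hsphere_ne_univ := setOf_inner_sub_sub_eq_zero_ne_univ hab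
  refine Or.inr ⟨_, _, hsphere, hsphere, hsphere_ne_univ, hsphere_ne_univ, ?_, ?_, _, _,
    hreflect, hreflect, ?_, ?_⟩
  · rw [Set.mem_ofPred_eq, hy, inner_neg_right, horth, neg_zero]
  · rw [Set.mem_ofPred_eq, hz, inner_neg_right, real_inner_comm, horth, neg_zero]
  · linear_combination (norm := module) hsum
  · linear_combination (norm := module) hsum

theorem EF.of_isRectangle_of_adjacent (ha : ∀ i, a i ∈ F) (hb : ∀ i, b i ∈ F) (hab : a ≠ b)
    (h : IsRectangle a y b z) : EF F y z := by
  obtain ⟨hsum, horth⟩ := h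
  have hu : ∀ i, (b - a) i ∈ F := fun i => sub_mem (hb i) (ha i)
  have hu0 : b - a ≠ 0 := sub_ne_zero.2 hab.symm
  have hy : y - b = z - a := by linear_combination (norm := module) hsum
  have hplane {c : EuclideanSpace ℝ (Fin n)} (hc : ∀ i, c i ∈ F) :=
    visibleAlgSet_setOf_eq_zero <| inner_mem_visiblePolyFun
      ((visiblePolyMap_id F).sub (visiblePolyMap_const hc)) (visiblePolyMap_const hu)
  refine Or.inr ⟨_, _, hplane hb, hplane ha, setOf_inner_sub_eq_zero_ne_univ hu0 b,
    setOf_inner_sub_eq_zero_ne_univ hu0 a, ?_, ?_, _, _,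
    (visiblePolyMap_id F).sub (visiblePolyMap_const hu),
    (visiblePolyMap_id F).add (visiblePolyMap_const hu), ?_, ?_⟩
  · rw [Set.mem_ofPred_eq, hy, real_inner_comm, horth]
  · rw [Set.mem_ofPred_eq, real_inner_comm, horth]
  · linear_combination (norm := module) hsum
  · linear_combination (norm := module) (-1 : ℝ) • hsum

end Rectangle

theorem stmt_14_general {n : ℕ} (F : Subfield ℝ) (x₀ x₁ x₂ x₃ : EuclideanSpace ℝ (Fin n))
    (hrect : IsRectangle x₀ x₁ x₂ x₃ ∨ IsRectangle x₀ x₂ x₁ x₃ ∨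
      IsRectangle x₀ x₃ x₁ x₂)
    (hnd : List.Pairwise (· ≠ ·) [x₀, x₁, x₂, x₃])
    (h₀ : ∀ i, x₀ i ∈ F) (h₁ : ∀ i, x₁ i ∈ F) :
    EF F x₂ x₃ := by
  have h01 : x₀ ≠ x₁ := List.rel_of_pairwise_cons hnd List.mem_cons_self
  rcases hrect with h | h | h
  · exact .of_isRectangle_of_opposite h₀ h₁ h01 h
  · exact .of_isRectangle_of_adjacent h₀ h₁ h01 h
  · exact (EF.of_isRectangle_of_adjacent h₀ h₁ h01 h).symm

/-- If `{x₀, x₁, x₂, x₃}` is a non-degenerate rectangle (in any pairing) with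
`x₀, x₁ ∈ F^n` and `x₂, x₃ ∉ F^n`, then `x₂ E_F x₃`. -/
theorem stmt_14 {n : ℕ} (F : Subfield ℝ) (x₀ x₁ x₂ x₃ : EuclideanSpace ℝ (Fin n))
    (hrect : IsRectangle x₀ x₁ x₂ x₃ ∨ IsRectangle x₀ x₂ x₁ x₃ ∨
      IsRectangle x₀ x₃ x₁ x₂)
    (hnd : List.Pairwise (· ≠ ·) [x₀, x₁, x₂, x₃])
    (h₀ : ∀ i, x₀ i ∈ F) (h₁ : ∀ i, x₁ i ∈ F)
    (h₂ : ¬ ∀ i, x₂ i ∈ F) (h₃ : ¬ ∀ i, x₃ i ∈ F) :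
    EF F x₂ x₃ :=
  stmt_14_general F x₀ x₁ x₂ x₃ hrect hnd h₀ h₁
end

section
/- Let n ≥ 2 and consider the hypergraph Γ_n of arity four on ℝ^n whose hyperedges are all vertex sets of non-degenerate rectangles. Assuming the Continuum Hypothesis (and the Axiom of Choice), the chromatic number of Γ_n is countable: there exists a function c : ℝ^n → ℕ such that no non-degenerate rectangle has all four vertices of the same color. -/
/-!
Under CH, a `ℚ`-vector space `V` of size `ℵ₁` is the union of an `ω₁`-chain of countable
subspaces `W z`. The level `L x` of a vector is the first `z` with `x ∈ W z`; colouring `x` by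
its index in some enumeration of `W (L x)` makes distinct vectors of equal colour have distinct
levels. If `a + b = c + d` is monochromatic, the vector of maximal level equals every other
vector of that level, and unless the solution is trivial it can be solved for as a rational
combination of vectors of lower level, contradicting the choice of its level. So every colour
class is a Sidon set in `V = ℝⁿ`, and a rectangle `x₀ + x₁ = x₂ + x₃` with four distinct
vertices cannot be monochromatic.
-/

open RealInnerProductSpace

open Cardinal Set

universe u

theorem Cardinal.countable_Iic_toType_ord_aleph_one (z : (ℵ₁ : Cardinal.{u}).ord.ToType) :
    (Iic z).Countable := by
  rw [← Iio_insert]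
  exact (le_aleph0_iff_set_countable.1 (lt_aleph_one_iff.1 (by simpa using mk_Iio_lt z))).insert z

theorem Cardinal.continuum_eq_aleph_one_of_ulift (h : continuum.{u} = ℵ₁) :
    continuum.{0} = ℵ₁ := by
  have : lift.{u} continuum.{0} = ℵ₁ := by rwa [lift_continuum]
  exact lift_eq_aleph_one.1 this

theorem mk_euclideanSpace_le_continuum (n : ℕ) : #(EuclideanSpace ℝ (Fin n)) ≤ 𝔠 := by
  rw [(WithLp.equiv 2 (Fin n → ℝ)).cardinal_eq, mk_arrow, mk_real]
  simpa using power_nat_le aleph0_le_continuum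

section Sidon

variable {V : Type*} [AddCommGroup V] [Module ℚ V]

def IsSidonColoring (g : V → ℕ) : Prop :=
  ∀ a b c d : V, a + b = c + d → g a = g b → g b = g c → g c = g d →
    a = c ∧ b = d ∨ a = d ∧ b = c

variable {β : Type*} [LinearOrder β] {W : β → Submodule ℚ V} {L : V → β} {g : V → ℕ}

theorem exists_level_of_monotone [WellFoundedLT β] (hW : Monotone W)
    (hcover : ∀ x, ∃ z, x ∈ W z) : ∃ L : V → β, ∀ x z, x ∈ W z ↔ L x ≤ z := by
  refine ⟨fun x => wellFounded_lt.min {z | x ∈ W z} (hcover x),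
    fun x z => ⟨fun hx => ?_, fun h => ?_⟩⟩
  · exact not_lt.1 (wellFounded_lt.not_lt_min {z | x ∈ W z} hx)
  · exact hW h (wellFounded_lt.min_mem {z | x ∈ W z} (hcover x))

theorem exists_injOn_levelSets (hL : ∀ x z, x ∈ W z ↔ L x ≤ z)
    (hW : ∀ z, (W z : Set V).Countable) :
    ∃ g : V → ℕ, ∀ z, InjOn g {x | L x = z} := by
  choose F hF using fun z => countable_iff_exists_injOn.1 (hW z)
  refine ⟨fun x => F (L x) x, fun z x (hx : L x = z) y (hy : L y = z) hxy => ?_⟩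
  subst hx
  exact hF (L x) ((hL x _).2 le_rfl) ((hL y _).2 hy.le) (by simpa [hy] using hxy)

theorem add_eq_add_trivial_of_max_level (hL : ∀ x z, x ∈ W z ↔ L x ≤ z)
    (hg : ∀ z, InjOn g {x | L x = z}) {a b c d : V}
    (hb : L b ≤ L a) (hc : L c ≤ L a) (hd : L d ≤ L a) (h : a + b = c + d)
    (hab : g b = g a) (hac : g c = g a) (had : g d = g a) :
    a = c ∧ b = d ∨ a = d ∧ b = c := by
  rcases hc.eq_or_lt with hc | hc
  · obtain rfl := hg (L a) hc rfl hac
    exact .inl ⟨rfl, add_left_cancel h⟩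
  rcases hd.eq_or_lt with hd | hd
  · obtain rfl := hg (L a) hd rfl had
    exact .inr ⟨rfl, add_left_cancel (h.trans (add_comm c _))⟩
  -- now `L c, L d < L a`: solving for `a` puts it in a strictly earlier `W`
  exfalso
  have mem : ∀ x z, L x ≤ z → x ∈ W z := fun x z => (hL x z).2
  rcases hb.eq_or_lt with hb | hb
  · obtain rfl := hg (L a) hb rfl hab
    have ha : b = (2⁻¹ : ℚ) • (c + d) := by
      rw [← h, ← two_smul ℚ b, smul_smul]; norm_num
    have := ha ▸ Submodule.smul_mem _ _ (Submodule.add_mem _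
      (mem c _ (le_max_left (L c) (L d))) (mem d _ (le_max_right _ _)))
    exact not_le.2 (max_lt hc hd) ((hL b _).1 this)
  · have ha : a = c + d - b := eq_sub_of_add_eq h
    have := ha ▸ Submodule.sub_mem _ (Submodule.add_mem _
      (mem c (max (max (L b) (L c)) (L d)) (by simp)) (mem d _ (by simp))) (mem b _ (by simp))
    exact not_le.2 (max_lt (max_lt hb hc) hd) ((hL a _).1 this)

theorem isSidonColoring_of_injOn_levelSets (hL : ∀ x z, x ∈ W z ↔ L x ≤ z)
    (hg : ∀ z, InjOn g {x | L x = z}) : IsSidonColoring g := by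
  intro a b c d h hab hbc hcd
  obtain ⟨k, ha, hb, hc, hd⟩ : ∃ k, g a = k ∧ g b = k ∧ g c = k ∧ g d = k :=
    ⟨_, rfl, hab.symm, (hab.trans hbc).symm, (hab.trans (hbc.trans hcd)).symm⟩
  clear hab hbc hcd
  wlog hba : L b ≤ L a generalizing a b
  · have := this b a (by rwa [add_comm]) hb ha (le_of_not_ge hba)
    tauto
  wlog hdc : L d ≤ L c generalizing c d
  · have := this d c hd hc (by rwa [add_comm d]) (le_of_not_ge hdc)
    tauto
  wlog hca : L c ≤ L a generalizing a b c d
  · have := this c d hc hd hdc a b ha hb h.symm hba (le_of_not_ge hca)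
    tauto
  exact add_eq_add_trivial_of_max_level hL hg hba hca (hdc.trans hca) h
    (hb.trans ha.symm) (hc.trans ha.symm) (hd.trans ha.symm)

end Sidon

theorem Submodule.exists_countable_filtration {V : Type u} [AddCommGroup V] [Module ℚ V]
    (h : #V ≤ ℵ₁) : ∃ W : (ℵ₁ : Cardinal.{u}).ord.ToType → Submodule ℚ V,
      Monotone W ∧ (∀ z, (W z : Set V).Countable) ∧ ∀ x, ∃ z, x ∈ W z := by
  obtain ⟨e⟩ : Nonempty (V ↪ (ℵ₁ : Cardinal.{u}).ord.ToType) := by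
    rwa [← le_def, mk_toType, card_ord]
  refine ⟨fun z => span ℚ (e ⁻¹' Iic z), fun z z' hz => span_mono fun x hx => le_trans hx hz,
    fun z => ?_, fun x => ⟨e x, subset_span (show e x ≤ e x from le_rfl)⟩⟩
  have : Countable (e ⁻¹' Iic z) :=
    ((countable_Iic_toType_ord_aleph_one z).preimage e.injective).to_subtype
  have := (inferInstance : Countable (span ℚ (range ((↑) : e ⁻¹' Iic z → V))))
  rw [Subtype.range_coe_subtype, ofPred_mem_eq] at this
  exact countable_coe_iff.1 this

theorem exists_isSidonColoring {V : Type u} [AddCommGroup V] [Module ℚ V] (h : #V ≤ ℵ₁) :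
    ∃ g : V → ℕ, IsSidonColoring g := by
  obtain ⟨W, hmono, hcount, hcover⟩ := Submodule.exists_countable_filtration h
  obtain ⟨L, hL⟩ := exists_level_of_monotone hmono hcover
  obtain ⟨g, hg⟩ := exists_injOn_levelSets hL hcount
  exact ⟨g, isSidonColoring_of_injOn_levelSets hL hg⟩

theorem stmt_16_general (n : ℕ)
    (hCH : Cardinal.continuum = Cardinal.aleph 1) :
    ∃ c : EuclideanSpace ℝ (Fin n) → ℕ,
      ∀ x₀ x₁ x₂ x₃ : EuclideanSpace ℝ (Fin n), IsRectangle x₀ x₁ x₂ x₃ →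
        List.Pairwise (· ≠ ·) [x₀, x₁, x₂, x₃] →
        ¬ (c x₀ = c x₁ ∧ c x₁ = c x₂ ∧ c x₂ = c x₃) := by
  obtain ⟨c, hc⟩ := exists_isSidonColoring
    ((mk_euclideanSpace_le_continuum n).trans (continuum_eq_aleph_one_of_ulift hCH).le)
  refine ⟨c, ?_⟩
  rintro x₀ x₁ x₂ x₃ ⟨hsum, -⟩ hdistinct ⟨h01, h12, h23⟩
  have h02 : x₀ ≠ x₂ := by simp_all
  have h03 : x₀ ≠ x₃ := by simp_all
  rcases hc x₀ x₁ x₂ x₃ hsum h01 h12 h23 with h | h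
  exacts [h02 h.1, h03 h.1]

/-- Under the Continuum Hypothesis, the hypergraph of non-degenerate rectangles in
`ℝ^n` has countable chromatic number: there is `c : ℝ^n → ℕ` such that no
non-degenerate rectangle is monochromatic. -/
theorem stmt_16 (n : ℕ) (hn : 2 ≤ n)
    (hCH : Cardinal.continuum = Cardinal.aleph 1) :
    ∃ c : EuclideanSpace ℝ (Fin n) → ℕ,
      ∀ x₀ x₁ x₂ x₃ : EuclideanSpace ℝ (Fin n), IsRectangle x₀ x₁ x₂ x₃ →
        List.Pairwise (· ≠ ·) [x₀, x₁, x₂, x₃] →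
        ¬ (c x₀ = c x₁ ∧ c x₁ = c x₂ ∧ c x₂ = c x₃) :=
  stmt_16_general n hCH
end
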